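/- arXiv:1608.01925 — 4 statements merged into one kernel-verified Lean document; each statement's English description precedes it below -/
import Mathlib

section
/- Let Ψ : ℝ → ℝ be a smooth function satisfying the differential equation -Ψ''(x) + (β³ x + β² α) Ψ(x) = 0 for all x ≥ 0, with real parameters α, β, β ≠ 0, and assume Ψ and Ψ' tend to 0 at +∞ fast enough that all integrals below converge. Then β³ ∫₀^∞ Ψ(x)² dx = Ψ'(0)² − α β² Ψ(0)². -/
open MeasureTheory Set Filter

lemma tendsto_limit_eq_zero_of_integrableOn {g : ℝ → ℝ} (hg : IntegrableOn g (Ioi 0)) {c : ℝ}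
    (hc : Tendsto g atTop (nhds c)) : c = 0 := by
  by_contra h
  have habs : Tendsto (fun x => |g x|) atTop (nhds |c|) := hc.abs
  have hpos : |c| / 2 < |c| := by
    have : 0 < |c| := abs_pos.mpr h
    linarith
  have hev : ∀ᶠ x in atTop, |c| / 2 < |g x| :=
    habs.eventually (eventually_gt_nhds hpos)
  obtain ⟨a, ha⟩ := hev.exists_forall_of_atTop
  set b := max a 0 with hb
  have hIb : IntegrableOn g (Ioi b) := hg.mono_set (Ioi_subset_Ioi (le_max_right a 0))
  have hconst : IntegrableOn (fun _ : ℝ => |c| / 2) (Ioi b) := by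
    refine Integrable.mono hIb aestronglyMeasurable_const ?_
    refine ae_restrict_of_forall_mem measurableSet_Ioi ?_
    intro x hx
    have : |c| / 2 < |g x| := ha x (le_of_lt (lt_of_le_of_lt (le_max_left a 0) hx))
    simp only [Real.norm_eq_abs, abs_abs]
    rw [abs_of_nonneg (by positivity)]
    exact this.le
  rw [integrableOn_const_iff] at hconst
  rcases hconst with h1 | h2
  · rw [enorm_eq_zero] at h1
    have : 0 < |c| := abs_pos.mpr h
    linarith [this, (by linarith : |c| / 2 > 0)]
  · simp [Real.volume_Ioi] at h2

theorem airy_ibp_identity_0 (Ψ : ℝ → ℝ) (α β : ℝ) (hβ : β ≠ 0)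
    (hsmooth : ContDiff ℝ (⊤ : ℕ∞) Ψ)
    (hode : ∀ x ≥ (0:ℝ), -(deriv (deriv Ψ) x) + (β^3 * x + β^2 * α) * Ψ x = 0)
    (hdecay : Tendsto Ψ atTop (nhds 0))
    (hdecay' : Tendsto (deriv Ψ) atTop (nhds 0))
    (hint : IntegrableOn (fun x => Ψ x ^ 2) (Ioi 0))
    (hint' : IntegrableOn (fun x => deriv Ψ x ^ 2) (Ioi 0))
    (hint2 : IntegrableOn (fun x => x * Ψ x ^ 2) (Ioi 0)) :
    β^3 * ∫ x in Ioi (0:ℝ), Ψ x ^ 2 = deriv Ψ 0 ^ 2 - α * β^2 * Ψ 0 ^ 2 := by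
  set F : ℝ → ℝ := fun x => (deriv Ψ x) ^ 2 - (β^3 * x + β^2 * α) * Ψ x ^ 2 with hF
  have hΨdiff : Differentiable ℝ Ψ := hsmooth.differentiable (by simp)
  have hΨ'diff : Differentiable ℝ (deriv Ψ) := by
    have h : ContDiff ℝ ((⊤:ℕ∞) : WithTop ℕ∞) Ψ := hsmooth.of_le (by simp)
    exact (contDiff_infty_iff_deriv.mp h).2.differentiable (by simp)
  have hFderiv : ∀ x ≥ (0:ℝ), HasDerivAt F (-(β^3 * Ψ x ^ 2)) x := by
    intro x hx
    have h1 : HasDerivAt (fun y => (deriv Ψ y) ^ 2)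
        (2 * deriv Ψ x ^ 1 * deriv (deriv Ψ) x) x := by
      have := ((hΨ'diff x).hasDerivAt).pow 2; simp only [pow_one]; simp at this; exact this
    have h2 : HasDerivAt (fun y => β^3 * y + β^2 * α) (β^3) x := by
      simpa using ((hasDerivAt_id x).const_mul (β^3)).add_const (β^2 * α)
    have h3 : HasDerivAt (fun y => Ψ y ^ 2) (2 * Ψ x ^ 1 * deriv Ψ x) x := by
      have := ((hΨdiff x).hasDerivAt).pow 2; simp only [pow_one]; simp at this; exact this
    have h4 := h1.sub (h2.mul h3)
    have hode' : deriv (deriv Ψ) x = (β^3 * x + β^2 * α) * Ψ x := by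
      have := hode x hx; linarith
    convert h4 using 1
    · rfl
    · rfl
    · rfl
    · rw [hode']; ring
  have hTend : Tendsto (fun T => ∫ x in (0:ℝ)..T, Ψ x ^ 2) atTop
      (nhds (∫ x in Ioi (0:ℝ), Ψ x ^ 2)) :=
    intervalIntegral_tendsto_integral_Ioi 0 hint tendsto_id
  have hFTC : ∀ᶠ T in atTop, F T = F 0 - β^3 * ∫ x in (0:ℝ)..T, Ψ x ^ 2 := by
    filter_upwards [eventually_ge_atTop (0:ℝ)] with T hT
    have heq : ∫ x in (0:ℝ)..T, -(β^3 * Ψ x ^ 2) = F T - F 0 := by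
      apply intervalIntegral.integral_eq_sub_of_hasDerivAt
      · intro x hx
        rw [uIcc_of_le hT] at hx
        exact hFderiv x hx.1
      · exact ((continuous_const.mul ((hΨdiff.continuous).pow 2)).neg).intervalIntegrable _ _
    have : ∫ x in (0:ℝ)..T, -(β^3 * Ψ x ^ 2) = -β^3 * ∫ x in (0:ℝ)..T, Ψ x ^ 2 := by
      rw [← intervalIntegral.integral_const_mul]
      congr 1; ext x; ring
    rw [this] at heq
    linarith
  set I := ∫ x in Ioi (0:ℝ), Ψ x ^ 2 with hI
  have hFlim : Tendsto F atTop (nhds (F 0 - β^3 * I)) := by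
    have : Tendsto (fun T => F 0 - β^3 * ∫ x in (0:ℝ)..T, Ψ x ^ 2) atTop
        (nhds (F 0 - β^3 * I)) := tendsto_const_nhds.sub (hTend.const_mul _)
    exact Tendsto.congr' (hFTC.mono fun _ h => h.symm) this
  have hhlim : Tendsto (fun x => (β^3 * x + β^2 * α) * Ψ x ^ 2) atTop
      (nhds (-(F 0 - β^3 * I))) := by
    have h1 : Tendsto (fun x => (deriv Ψ x) ^ 2) atTop (nhds 0) := by
      simpa using hdecay'.pow 2
    have := h1.sub hFlim
    simp only [hF] at this ⊢
    convert this using 2 with x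
    · ring
    · ring
  have hhint : IntegrableOn (fun x => (β^3 * x + β^2 * α) * Ψ x ^ 2) (Ioi 0) := by
    have h5 : IntegrableOn (fun x => β^3 * (x * Ψ x ^ 2) + β^2 * α * Ψ x ^ 2) (Ioi 0) :=
      (hint2.const_mul (β^3)).add (hint.const_mul (β^2 * α))
    exact h5.congr_fun (fun x _ => by ring) measurableSet_Ioi
  have hzero : -(F 0 - β^3 * I) = 0 := tendsto_limit_eq_zero_of_integrableOn hhint hhlim
  have hF0 : F 0 = deriv Ψ 0 ^ 2 - β^2 * α * Ψ 0 ^ 2 := by simp [hF]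
  rw [hF0] at hzero
  linarith
end

section
/- Let Ψ : ℝ → ℝ be smooth with -Ψ''(x) + (β³ x + β² α) Ψ(x) = 0 for x ≥ 0 and sufficient decay at +∞, with β ≠ 0 and α ≠ 0. Assume Ψ'(0) = 0 (Neumann condition). Then ∫₀^∞ x Ψ(x)² dx = −(2α)/(3β) · ∫₀^∞ Ψ(x)² dx, and ∫₀^∞ Ψ(x)² dx = −(α/β) Ψ(0)². -/
open MeasureTheory Set Filter

/-- If `g` is integrable on `(0,∞)` and tends to `c` at `+∞`, then `c = 0`. -/
private lemma lim_eq_zero_of_integrableOn {g : ℝ → ℝ} (hg : IntegrableOn g (Ioi (0:ℝ))) {c : ℝ}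
    (h : Tendsto g atTop (nhds c)) : c = 0 := by
  by_contra hc
  have habs : Tendsto (fun x => |g x|) atTop (nhds |c|) := h.abs
  have hev : ∀ᶠ x in atTop, |c| / 2 ≤ |g x| :=
    habs.eventually (eventually_ge_nhds (half_lt_self (abs_pos.mpr hc)))
  obtain ⟨M, hM⟩ := hev.exists_forall_of_atTop
  set N : ℝ := max M 0 with hN
  have hN0 : (0:ℝ) ≤ N := le_max_right _ _
  have hgN : IntegrableOn g (Ioi N) := hg.mono_set (Ioi_subset_Ioi hN0)
  have hconst : Integrable (fun _ : ℝ => |c| / 2) (volume.restrict (Ioi N)) := by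
    refine Integrable.mono' hgN.abs aestronglyMeasurable_const ?_
    refine (ae_restrict_iff' measurableSet_Ioi).mpr (ae_of_all _ ?_)
    intro x hx
    have : M ≤ x := le_trans (le_max_left _ _) (le_of_lt hx)
    simpa [abs_of_nonneg (by positivity : (0:ℝ) ≤ |c| / 2)] using hM x this
  rw [integrable_const_iff] at hconst
  rcases hconst with h0 | hfin
  · have : |c| = 0 := by linarith
    exact hc (abs_eq_zero.mp this)
  · have hfin := hfin.measure_univ_lt_top
    simp [Measure.restrict_apply, Real.volume_Ioi] at hfin

/-- Fundamental theorem of calculus on `[0, x]`. -/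
private lemma ftc_Ici {F G : ℝ → ℝ} (hF : ∀ x ∈ Ici (0:ℝ), HasDerivAt F (G x) x)
    (hG : IntegrableOn G (Ioi (0:ℝ))) {x : ℝ} (hx : 0 ≤ x) :
    F x = F 0 + ∫ t in (0:ℝ)..x, G t := by
  have h1 : ∫ t in (0:ℝ)..x, G t = F x - F 0 := by
    apply intervalIntegral.integral_eq_sub_of_hasDerivAt
    · intro t ht
      rw [uIcc_of_le hx] at ht
      exact hF t ht.1
    · rw [intervalIntegrable_iff_integrableOn_Ioc_of_le hx]
      exact hG.mono_set Ioc_subset_Ioi_self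
  linarith [h1]

/-- If `F' = G` on `[0,∞)` with `G` integrable, then `F` tends to `F 0 + ∫_{(0,∞)} G`. -/
private lemma tendsto_of_hasDerivAt_integrableOn {F G : ℝ → ℝ}
    (hF : ∀ x ∈ Ici (0:ℝ), HasDerivAt F (G x) x)
    (hG : IntegrableOn G (Ioi (0:ℝ))) :
    Tendsto F atTop (nhds (F 0 + ∫ x in Ioi (0:ℝ), G x)) := by
  have h2 : Tendsto (fun x : ℝ => F 0 + ∫ t in (0:ℝ)..x, G t) atTop
      (nhds (F 0 + ∫ x in Ioi (0:ℝ), G x)) :=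
    tendsto_const_nhds.add (intervalIntegral_tendsto_integral_Ioi 0 hG tendsto_id)
  refine h2.congr' ?_
  filter_upwards [eventually_ge_atTop (0:ℝ)] with x hx
  exact (ftc_Ici hF hG hx).symm

/-- Splitting the integral over `(0,∞)` at a point `x ≥ 0`. -/
private lemma split_integral {G : ℝ → ℝ} (hG : IntegrableOn G (Ioi (0:ℝ))) {x : ℝ} (hx : 0 ≤ x) :
    (∫ t in Ioi (0:ℝ), G t) = (∫ t in (0:ℝ)..x, G t) + ∫ t in Ioi x, G t := by
  rw [intervalIntegral.integral_of_le hx,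
    ← setIntegral_union (Ioc_disjoint_Ioi le_rfl) measurableSet_Ioi
      (hG.mono_set Ioc_subset_Ioi_self) (hG.mono_set (Ioi_subset_Ioi hx)),
    Ioc_union_Ioi_eq_Ioi hx]

theorem airy_neumann_moments (Ψ : ℝ → ℝ) (α β : ℝ) (hβ : β ≠ 0) (hα : α ≠ 0)
    (hsmooth : ContDiff ℝ (⊤ : ℕ∞) Ψ)
    (hode : ∀ x ≥ (0:ℝ), -(deriv (deriv Ψ) x) + (β^3 * x + β^2 * α) * Ψ x = 0)
    (hdecay : Tendsto Ψ atTop (nhds 0))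
    (hdecay' : Tendsto (deriv Ψ) atTop (nhds 0))
    (hint : IntegrableOn (fun x => Ψ x ^ 2) (Ioi 0))
    (hint' : IntegrableOn (fun x => deriv Ψ x ^ 2) (Ioi 0))
    (hint2 : IntegrableOn (fun x => x * Ψ x ^ 2) (Ioi 0))
    (hint3 : IntegrableOn (fun x => x * deriv Ψ x ^ 2) (Ioi 0))
    (hNeu : deriv Ψ 0 = 0) :
    (∫ x in Ioi (0:ℝ), x * Ψ x ^ 2) = -(2 * α) / (3 * β) * ∫ x in Ioi (0:ℝ), Ψ x ^ 2 ∧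
    (∫ x in Ioi (0:ℝ), Ψ x ^ 2) = -(α / β) * Ψ 0 ^ 2 := by
  have hβ3 : (β:ℝ)^3 ≠ 0 := pow_ne_zero 3 hβ
  have hβ2 : (β:ℝ)^2 ≠ 0 := pow_ne_zero 2 hβ
  have hΨd : Differentiable ℝ Ψ := hsmooth.differentiable (by simp)
  have hΨ'd : Differentiable ℝ (deriv Ψ) :=
    (contDiff_infty_iff_deriv.mp (hsmooth.of_le (by simp))).2.differentiable (by simp)
  have hode' : ∀ x, 0 ≤ x → deriv (deriv Ψ) x = (β^3 * x + β^2 * α) * Ψ x := by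
    intro x hx; linarith [hode x hx]
  -- notation
  set I0 : ℝ := ∫ x in Ioi (0:ℝ), Ψ x ^ 2 with hI0
  set I1 : ℝ := ∫ x in Ioi (0:ℝ), x * Ψ x ^ 2 with hI1
  set J0 : ℝ := ∫ x in Ioi (0:ℝ), deriv Ψ x ^ 2 with hJ0
  -- the three auxiliary functions
  set A : ℝ → ℝ := fun x => deriv Ψ x ^ 2 - (β^3 * x + β^2 * α) * Ψ x ^ 2 with hA_def
  set B : ℝ → ℝ := fun x => Ψ x * deriv Ψ x with hB_def
  set C : ℝ → ℝ := fun x => x * A x with hC_def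
  -- canonical expansion of integrals
  have expand : ∀ c d : ℝ,
      (∫ x in Ioi (0:ℝ), (deriv Ψ x ^ 2 + c * (x * Ψ x ^ 2) + d * Ψ x ^ 2))
        = J0 + c * I1 + d * I0 := by
    intro c d
    have h1 : IntegrableOn (fun x => deriv Ψ x ^ 2 + c * (x * Ψ x ^ 2)) (Ioi (0:ℝ)) := by
      exact hint'.add (hint2.const_mul c)
    have h2 : IntegrableOn (fun x => c * (x * Ψ x ^ 2)) (Ioi (0:ℝ)) := hint2.const_mul c
    have h3 : IntegrableOn (fun x => d * Ψ x ^ 2) (Ioi (0:ℝ)) := hint.const_mul d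
    rw [integral_add h1 h3, integral_add hint' h2, integral_const_mul, integral_const_mul]
  -- derivatives
  have hdA : ∀ x ∈ Ici (0:ℝ), HasDerivAt A (-(β^3) * Ψ x ^ 2) x := by
    intro x hx
    have h1 : HasDerivAt (fun y => deriv Ψ y ^ 2)
        (2 * deriv Ψ x ^ 1 * deriv (deriv Ψ) x) x := ((hΨ'd x).hasDerivAt).pow 2
    have ha : HasDerivAt (fun y : ℝ => β^3 * y + β^2 * α) (β^3) x := by
      simpa using ((hasDerivAt_id x).const_mul (β^3)).add_const (β^2 * α)
    have hb : HasDerivAt (fun y => Ψ y ^ 2) (2 * Ψ x ^ 1 * deriv Ψ x) x :=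
      ((hΨd x).hasDerivAt).pow 2
    have h2 := ha.mul hb
    have h3 := h1.sub h2
    simp only [hA_def]
    refine h3.congr_deriv ?_
    rw [hode' x hx]
    ring
  have hdB : ∀ x ∈ Ici (0:ℝ),
      HasDerivAt B (deriv Ψ x ^ 2 + β^3 * (x * Ψ x ^ 2) + β^2 * α * Ψ x ^ 2) x := by
    intro x hx
    have h := ((hΨd x).hasDerivAt).mul ((hΨ'd x).hasDerivAt)
    simp only [hB_def]
    refine h.congr_deriv ?_
    rw [hode' x hx]
    ring
  have hdC : ∀ x ∈ Ici (0:ℝ),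
      HasDerivAt C (deriv Ψ x ^ 2 + (-(2 * β^3)) * (x * Ψ x ^ 2) + (-(β^2 * α)) * Ψ x ^ 2) x := by
    intro x hx
    have h := (hasDerivAt_id x).mul (hdA x hx)
    simp only [hC_def]
    refine h.congr_deriv ?_
    simp only [hA_def, id_eq]
    ring
  -- integrability of the derivatives
  have intA' : IntegrableOn (fun x => -(β^3) * Ψ x ^ 2) (Ioi (0:ℝ)) := hint.const_mul _
  have intBC' : ∀ c d : ℝ,
      IntegrableOn (fun x => deriv Ψ x ^ 2 + c * (x * Ψ x ^ 2) + d * Ψ x ^ 2) (Ioi (0:ℝ)) :=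
    fun c d => (hint'.add (hint2.const_mul c)).add (hint.const_mul d)
  -- Relation B : J0 + β³ I1 + β²α I0 = 0
  have limB : Tendsto B atTop (nhds 0) := by
    simpa using hdecay.mul hdecay'
  have hRB : J0 + β^3 * I1 + β^2 * α * I0 = 0 := by
    have h := tendsto_of_hasDerivAt_integrableOn hdB (intBC' (β^3) (β^2*α))
    have h0 := tendsto_nhds_unique h limB
    rw [expand] at h0
    have hB0 : B 0 = 0 := by simp [hB_def, hNeu]
    rw [hB0, zero_add] at h0
    exact h0
  -- Relation A : β³ I0 = - β²α Ψ(0)², via the limit of A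
  have tA := tendsto_of_hasDerivAt_integrableOn hdA intA'
  set L : ℝ := A 0 + ∫ x in Ioi (0:ℝ), -(β^3) * Ψ x ^ 2 with hL_def
  have tX : Tendsto (fun x => x * Ψ x ^ 2) atTop
      (nhds ((0 * 0 - β^2 * α * (0 * 0) - L) * (β^3)⁻¹)) := by
    have h := (((hdecay'.mul hdecay').sub ((hdecay.mul hdecay).const_mul (β^2*α))).sub
      tA).mul_const ((β^3)⁻¹)
    refine h.congr (fun x => ?_)
    simp only [hA_def]
    field_simp
    ring
  have hLcalc : (0 * 0 - β^2 * α * (0 * 0) - L) * (β^3)⁻¹ = 0 :=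
    lim_eq_zero_of_integrableOn hint2 tX
  have hL0 : L = 0 := by
    field_simp at hLcalc
    simpa using hLcalc
  have tX0 : Tendsto (fun x => x * Ψ x ^ 2) atTop (nhds 0) := by
    rwa [hLcalc] at tX
  have hRA : β^3 * I0 = -(β^2 * α * Ψ 0 ^ 2) := by
    have hintL : ∫ x in Ioi (0:ℝ), -(β^3) * Ψ x ^ 2 = -(β^3) * I0 := integral_const_mul _ _
    have hA0 : A 0 = -(β^2 * α * Ψ 0 ^ 2) := by simp only [hA_def]; rw [hNeu]; ring
    have hcopy := hL0
    rw [hL_def, hintL, hA0] at hcopy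
    linarith
  -- identity 2
  have hid2 : I0 = -(α / β) * Ψ 0 ^ 2 := by
    have h2 : β^2 * (-(α / β) * Ψ 0 ^ 2) = β^2 * I0 := by
      field_simp
      have h5 : β^2 * (β * I0 + α * Ψ 0 ^ 2) = 0 := by linear_combination hRA
      rcases mul_eq_zero.mp h5 with h6 | h6
      · exact absurd h6 hβ2
      · linarith
    have := mul_left_cancel₀ hβ2 h2
    linarith
  -- A x = β³ ∫_{Ioi x} Ψ² for x ≥ 0
  have hAx : ∀ x : ℝ, 0 ≤ x → A x = β^3 * ∫ t in Ioi x, Ψ t ^ 2 := by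
    intro x hx
    have h1 : A x = A 0 + ∫ t in (0:ℝ)..x, -(β^3) * Ψ t ^ 2 := ftc_Ici hdA intA' hx
    have h2 := split_integral intA' hx
    have h3 : A 0 + ∫ t in Ioi (0:ℝ), -(β^3) * Ψ t ^ 2 = 0 := hL_def ▸ hL0
    have h4 : (∫ t in Ioi x, -(β^3) * Ψ t ^ 2) = -(β^3) * ∫ t in Ioi x, Ψ t ^ 2 :=
      integral_const_mul _ _
    rw [h4] at h2
    rw [h1]
    linarith
  -- C tends to zero
  have hTsplit : ∀ x : ℝ, 0 ≤ x →
      (∫ t in Ioi x, t * Ψ t ^ 2) = I1 - ∫ t in (0:ℝ)..x, t * Ψ t ^ 2 := by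
    intro x hx
    have := split_integral hint2 hx
    rw [hI1]; linarith
  have hTlim : Tendsto (fun x : ℝ => ∫ t in Ioi x, t * Ψ t ^ 2) atTop (nhds 0) := by
    have h := intervalIntegral_tendsto_integral_Ioi 0 hint2 (tendsto_id (α := ℝ))
    have h2 : Tendsto (fun x : ℝ => I1 - ∫ t in (0:ℝ)..x, t * Ψ t ^ 2) atTop
        (nhds (I1 - I1)) := tendsto_const_nhds.sub h
    rw [sub_self] at h2
    refine h2.congr' ?_
    filter_upwards [eventually_ge_atTop (0:ℝ)] with x hx
    exact (hTsplit x hx).symm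
  have limC : Tendsto C atTop (nhds 0) := by
    have hglim : Tendsto (fun x : ℝ => |β^3| * |∫ t in Ioi x, t * Ψ t ^ 2|) atTop (nhds 0) := by
      have := (hTlim.abs.const_mul (|β^3|))
      simpa using this
    refine squeeze_zero_norm' ?_ hglim
    filter_upwards [eventually_ge_atTop (0:ℝ)] with x hx
    have hxA : C x = β^3 * ∫ t in Ioi x, x * Ψ t ^ 2 := by
      rw [hC_def]
      simp only []
      rw [hAx x hx, integral_const_mul]
      ring
    have hintx : IntegrableOn (fun t => x * Ψ t ^ 2) (Ioi x) :=
      (hint.mono_set (Ioi_subset_Ioi hx)).const_mul x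
    have hintt : IntegrableOn (fun t => t * Ψ t ^ 2) (Ioi x) :=
      hint2.mono_set (Ioi_subset_Ioi hx)
    have hmono : (∫ t in Ioi x, x * Ψ t ^ 2) ≤ ∫ t in Ioi x, t * Ψ t ^ 2 := by
      refine setIntegral_mono_on hintx hintt measurableSet_Ioi ?_
      intro t ht
      exact mul_le_mul_of_nonneg_right (le_of_lt ht) (sq_nonneg _)
    have hnn : 0 ≤ ∫ t in Ioi x, x * Ψ t ^ 2 :=
      setIntegral_nonneg measurableSet_Ioi (fun t _ => mul_nonneg hx (sq_nonneg _))
    rw [hxA]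
    rw [Real.norm_eq_abs, abs_mul, abs_of_nonneg hnn]
    exact mul_le_mul_of_nonneg_left (hmono.trans (le_abs_self _)) (abs_nonneg _)
  -- Relation C : J0 - 2β³ I1 - β²α I0 = 0
  have hRC : J0 + (-(2 * β^3)) * I1 + (-(β^2 * α)) * I0 = 0 := by
    have h := tendsto_of_hasDerivAt_integrableOn hdC (intBC' (-(2 * β^3)) (-(β^2 * α)))
    have h0 := tendsto_nhds_unique h limC
    rw [expand] at h0
    have hC0 : C 0 = 0 := by simp [hC_def]
    rw [hC0, zero_add] at h0
    exact h0
  -- identity 1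
  have hid1 : I1 = -(2 * α) / (3 * β) * I0 := by
    have hkey : 3 * β^3 * I1 = -(2 * β^2 * α * I0) := by linarith
    have h2 : β^2 * (-(2 * α) / (3 * β) * I0) = β^2 * I1 := by
      field_simp
      have h5 : β^2 * (3 * β * I1 + 2 * α * I0) = 0 := by linear_combination hkey
      rcases mul_eq_zero.mp h5 with h6 | h6
      · exact absurd h6 hβ2
      · linarith
    have := mul_left_cancel₀ hβ2 h2
    linarith
  exact ⟨hid1, hid2⟩
end

section
/- Let Ψ : ℝ → ℝ be smooth with -Ψ''(x) + (β³ x + β² α) Ψ(x) = 0 for x ≥ 0, sufficient decay at +∞, β ≠ 0, Neumann condition Ψ'(0) = 0, α ≠ 0, and normalization ∫₀^∞ Ψ² dx = 1 (so Ψ(0)² = −β/α). Then ∫₀^∞ x² Ψ(x)² dx = (8α³ − 3)/(15 α β²). -/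
open MeasureTheory Set Filter
open scoped ContDiff

lemma limit_zero_of_integrableOn {f : ℝ → ℝ} (hf : IntegrableOn f (Ioi (0:ℝ)))
    {L : ℝ} (h : Tendsto f atTop (nhds L)) : L = 0 := by
  by_contra hL
  have hpos : 0 < |L| / 2 := by positivity
  have hev : ∀ᶠ x in atTop, |L| / 2 ≤ |f x| := by
    filter_upwards [h.eventually (eventually_abs_sub_lt L hpos)] with x hx
    have h1 : |L| - |f x| ≤ |L - f x| := abs_sub_abs_le_abs_sub L (f x)
    rw [abs_sub_comm] at h1
    linarith
  obtain ⟨A, hA⟩ := hev.exists_forall_of_atTop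
  set B := max A 1 with hB
  have hint : IntegrableOn f (Ioi B) := hf.mono_set (Ioi_subset_Ioi (by positivity))
  have hconst : IntegrableOn (fun _ : ℝ => |L| / 2) (Ioi B) := by
    apply Integrable.mono' hint.abs aestronglyMeasurable_const
    filter_upwards [ae_restrict_mem measurableSet_Ioi] with x hx
    simpa [abs_of_pos hpos] using hA x (le_of_lt (lt_of_le_of_lt (le_max_left A 1) hx))
  rw [integrableOn_const_iff] at hconst
  rcases hconst with h1 | h2
  · exact absurd h1 (by simp [hL])
  · simp [Real.volume_Ioi] at h2

lemma tail_tendsto_zero {f : ℝ → ℝ} (hf : IntegrableOn f (Ioi (0:ℝ))) :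
    Tendsto (fun x => ∫ t in Ioi x, f t) atTop (nhds 0) := by
  have h1 : Tendsto (fun x => ∫ t in (0:ℝ)..x, f t) atTop (nhds (∫ t in Ioi (0:ℝ), f t)) :=
    intervalIntegral_tendsto_integral_Ioi 0 hf tendsto_id
  have h2 : ∀ᶠ x in atTop, (∫ t in Ioi (0:ℝ), f t) - (∫ t in (0:ℝ)..x, f t) = ∫ t in Ioi x, f t := by
    filter_upwards [eventually_ge_atTop (0:ℝ)] with x hx
    rw [intervalIntegral.integral_of_le hx]
    have hsplit : Ioi (0:ℝ) = Ioc 0 x ∪ Ioi x := (Ioc_union_Ioi_eq_Ioi hx).symm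
    rw [show (∫ t in Ioi (0:ℝ), f t) = ∫ t in Ioc 0 x ∪ Ioi x, f t by rw [← hsplit]]
    rw [setIntegral_union (by simp [Set.disjoint_left]) measurableSet_Ioi
      (hf.mono_set (by rw [hsplit]; exact subset_union_left))
      (hf.mono_set (by rw [hsplit]; exact subset_union_right))]
    ring
  have h3 : Tendsto (fun x => (∫ t in Ioi (0:ℝ), f t) - (∫ t in (0:ℝ)..x, f t)) atTop
      (nhds ((∫ t in Ioi (0:ℝ), f t) - (∫ t in Ioi (0:ℝ), f t))) := tendsto_const_nhds.sub h1
  rw [sub_self] at h3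
  exact h3.congr' h2

lemma integral_split {f : ℝ → ℝ} (hf : IntegrableOn f (Ioi (0:ℝ))) {x : ℝ} (hx : 0 ≤ x) :
    (∫ t in Ioi (0:ℝ), f t) = (∫ t in (0:ℝ)..x, f t) + ∫ t in Ioi x, f t := by
  rw [intervalIntegral.integral_of_le hx]
  have hsplit : Ioi (0:ℝ) = Ioc 0 x ∪ Ioi x := (Ioc_union_Ioi_eq_Ioi hx).symm
  rw [show (∫ t in Ioi (0:ℝ), f t) = ∫ t in Ioc 0 x ∪ Ioi x, f t by rw [← hsplit]]
  rw [setIntegral_union (by simp [Set.disjoint_left]) measurableSet_Ioi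
    (hf.mono_set (by rw [hsplit]; exact subset_union_left))
    (hf.mono_set (by rw [hsplit]; exact subset_union_right))]

theorem airy_neumann_second_moment (Ψ : ℝ → ℝ) (α β : ℝ) (hβ : β ≠ 0) (hα : α ≠ 0)
    (hsmooth : ContDiff ℝ (⊤ : ℕ∞) Ψ)
    (hode : ∀ x ≥ (0:ℝ), -(deriv (deriv Ψ) x) + (β^3 * x + β^2 * α) * Ψ x = 0)
    (hdecay : Tendsto Ψ atTop (nhds 0))
    (hdecay' : Tendsto (deriv Ψ) atTop (nhds 0))
    (hint : IntegrableOn (fun x => Ψ x ^ 2) (Ioi 0))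
    (hint' : IntegrableOn (fun x => deriv Ψ x ^ 2) (Ioi 0))
    (hint2 : IntegrableOn (fun x => x * Ψ x ^ 2) (Ioi 0))
    (hint3 : IntegrableOn (fun x => x * deriv Ψ x ^ 2) (Ioi 0))
    (hint4 : IntegrableOn (fun x => x^2 * Ψ x ^ 2) (Ioi 0))
    (hNeu : deriv Ψ 0 = 0)
    (hnorm : (∫ x in Ioi (0:ℝ), Ψ x ^ 2) = 1) :
    (∫ x in Ioi (0:ℝ), x^2 * Ψ x ^ 2) = (8 * α^3 - 3) / (15 * α * β^2) := by
  have hβ3 : β^3 ≠ 0 := pow_ne_zero 3 hβ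
  -- basic differentiability
  have hdΨ : Differentiable ℝ Ψ := hsmooth.differentiable (by simp)
  have hdΨ' : Differentiable ℝ (deriv Ψ) :=
    (contDiff_infty_iff_deriv.mp (hsmooth.of_le (by simp))).2.differentiable (by norm_num)
  have hcΨ : Continuous Ψ := hdΨ.continuous
  have hcΨ' : Continuous (deriv Ψ) := hdΨ'.continuous
  have hode' : ∀ x ≥ (0:ℝ), deriv (deriv Ψ) x = (β^3 * x + β^2 * α) * Ψ x := by
    intro x hx; linarith [hode x hx]
  have hΨat : ∀ x : ℝ, HasDerivAt Ψ (deriv Ψ x) x := fun x => (hdΨ x).hasDerivAt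
  have hΨ'at : ∀ x ≥ (0:ℝ), HasDerivAt (deriv Ψ) ((β^3 * x + β^2 * α) * Ψ x) x := by
    intro x hx
    have := (hdΨ' x).hasDerivAt
    rwa [hode' x hx] at this
  -- names for the main integrals
  set J0 : ℝ := ∫ x in Ioi (0:ℝ), deriv Ψ x ^ 2 with hJ0def
  set J1 : ℝ := ∫ x in Ioi (0:ℝ), x * deriv Ψ x ^ 2 with hJ1def
  set I1 : ℝ := ∫ x in Ioi (0:ℝ), x * Ψ x ^ 2 with hI1def
  set I2 : ℝ := ∫ x in Ioi (0:ℝ), x^2 * Ψ x ^ 2 with hI2def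
  -- the conserved-type quantity G and the tail T
  set G : ℝ → ℝ := fun x => deriv Ψ x ^ 2 - (β^3 * x + β^2 * α) * Ψ x ^ 2 with hGdef
  set T : ℝ → ℝ := fun x => ∫ t in Ioi x, Ψ t ^ 2 with hTdef
  -- explicitly typed integrability combinations
  have hiA : IntegrableOn (fun x => deriv Ψ x ^ 2 + β^3 * (x * Ψ x ^ 2)) (Ioi (0:ℝ)) :=
    hint'.add (hint2.const_mul (β^3))
  have hiB : IntegrableOn
      (fun x => deriv Ψ x ^ 2 + β^3 * (x * Ψ x ^ 2) + β^2 * α * Ψ x ^ 2) (Ioi (0:ℝ)) :=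
    hiA.add (hint.const_mul (β^2*α))
  have hiC : IntegrableOn (fun x => β^3 * (x * Ψ x ^ 2) + β^2 * α * Ψ x ^ 2) (Ioi (0:ℝ)) :=
    (hint2.const_mul (β^3)).add (hint.const_mul (β^2*α))
  have hiD : IntegrableOn (fun x => x * deriv Ψ x ^ 2 + β^3 * (x^2 * Ψ x ^ 2)) (Ioi (0:ℝ)) :=
    hint3.add (hint4.const_mul (β^3))
  have hiE : IntegrableOn
      (fun x => x * deriv Ψ x ^ 2 + β^3 * (x^2 * Ψ x ^ 2) + β^2 * α * (x * Ψ x ^ 2))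
      (Ioi (0:ℝ)) := hiD.add (hint2.const_mul (β^2*α))
  have hiF : IntegrableOn (fun x => x * deriv Ψ x ^ 2 - β^3 * (x^2 * Ψ x ^ 2)) (Ioi (0:ℝ)) :=
    hint3.sub (hint4.const_mul (β^3))
  have hiG : IntegrableOn
      (fun x => x * deriv Ψ x ^ 2 - β^3 * (x^2 * Ψ x ^ 2) - β^2 * α * (x * Ψ x ^ 2))
      (Ioi (0:ℝ)) := hiF.sub (hint2.const_mul (β^2*α))
  have hiH : IntegrableOn (fun x =>
      (β^3)⁻¹ * (x * deriv Ψ x ^ 2 - β^3 * (x^2 * Ψ x ^ 2) - β^2 * α * (x * Ψ x ^ 2)))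
      (Ioi (0:ℝ)) := hiG.const_mul ((β^3)⁻¹)
  have hiI : IntegrableOn (fun x => x^2 * Ψ x ^ 2 / 2) (Ioi (0:ℝ)) := hint4.div_const 2
  have hGderiv : ∀ x ≥ (0:ℝ), HasDerivAt G (-(β^3) * Ψ x ^ 2) x := by
    intro x hx
    have h1 : HasDerivAt (fun y => deriv Ψ y ^ 2)
        (2 * deriv Ψ x ^ 1 * ((β^3 * x + β^2 * α) * Ψ x)) x := (hΨ'at x hx).pow 2
    have hlin : HasDerivAt (fun y : ℝ => β^3 * y + β^2 * α) (β^3) x := by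
      simpa using ((hasDerivAt_id x).const_mul (β^3)).add_const (β^2*α)
    have h2 : HasDerivAt (fun y => (β^3 * y + β^2 * α) * Ψ y ^ 2)
        (β^3 * Ψ x ^ 2 + (β^3 * x + β^2 * α) * (2 * Ψ x ^ 1 * deriv Ψ x)) x :=
      hlin.mul ((hΨat x).pow 2)
    have := h1.sub h2
    refine this.congr_deriv ?_
    ring
  -- G is integrable on (0,∞)
  have hG_int : IntegrableOn G (Ioi (0:ℝ)) := by
    have h := hint'.sub ((hint2.const_mul (β^3)).add (hint.const_mul (β^2*α)))
    exact h.congr (ae_of_all _ fun x => by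
      simp only [Pi.sub_apply, Pi.add_apply]; ring)
  -- G x = G 0 - β³ ∫₀ˣ Ψ² for x ≥ 0
  have hGFTC : ∀ x ≥ (0:ℝ), G x = G 0 - β^3 * ∫ t in (0:ℝ)..x, Ψ t ^ 2 := by
    intro x hx
    have hftc : (∫ t in (0:ℝ)..x, -(β^3) * Ψ t ^ 2) = G x - G 0 := by
      apply intervalIntegral.integral_eq_sub_of_hasDerivAt
      · intro t ht
        rw [uIcc_of_le hx] at ht
        exact hGderiv t ht.1
      · exact (continuous_const.mul (hcΨ.pow 2)).intervalIntegrable 0 x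
    rw [intervalIntegral.integral_const_mul] at hftc
    linarith
  -- G tends to G 0 - β³ at infinity
  have hGlim : Tendsto G atTop (nhds (G 0 - β^3)) := by
    have h1 : Tendsto (fun x => ∫ t in (0:ℝ)..x, Ψ t ^ 2) atTop (nhds 1) := by
      have := intervalIntegral_tendsto_integral_Ioi 0 hint tendsto_id
      rwa [hnorm] at this
    have h2 : Tendsto (fun x => G 0 - β^3 * ∫ t in (0:ℝ)..x, Ψ t ^ 2) atTop
        (nhds (G 0 - β^3 * 1)) := tendsto_const_nhds.sub (h1.const_mul (β^3))
    rw [mul_one] at h2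
    apply h2.congr'
    filter_upwards [eventually_ge_atTop (0:ℝ)] with x hx
    exact (hGFTC x hx).symm
  -- deduce G 0 = β³ (hence Ψ(0)² = -β/α) from integrability of x Ψ²
  have hΨ'sq : Tendsto (fun x => deriv Ψ x ^ 2) atTop (nhds 0) := by
    have := hdecay'.mul hdecay'
    rw [mul_zero] at this
    exact this.congr (fun x => (sq (deriv Ψ x)).symm)
  have hΨsq : Tendsto (fun x => Ψ x ^ 2) atTop (nhds 0) := by
    have := hdecay.mul hdecay
    rw [mul_zero] at this
    exact this.congr (fun x => (sq (Ψ x)).symm)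
  have hxΨsq_lim : Tendsto (fun x => x * Ψ x ^ 2) atTop
      (nhds ((0 - β^2 * α * 0 - (G 0 - β^3)) / β^3)) := by
    have h := ((hΨ'sq.sub (hΨsq.const_mul (β^2*α))).sub hGlim).div_const (β^3)
    apply h.congr
    intro x
    field_simp [hGdef]
    ring
  have hG0 : G 0 = β^3 := by
    have := limit_zero_of_integrableOn hint2 hxΨsq_lim
    have h2 : G 0 - β^3 = 0 := by
      field_simp at this
      linarith
    linarith
  have hΨ0 : Ψ 0 ^ 2 = -β / α := by
    have h1 : G 0 = -(β^2 * α) * Ψ 0 ^ 2 := by simp [hGdef, hNeu]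
    rw [h1] at hG0
    have h2 : β^2 * (α * Ψ 0 ^ 2 + β) = 0 := by linear_combination (-1 : ℝ) * hG0
    have h3 : α * Ψ 0 ^ 2 + β = 0 := by
      rcases mul_eq_zero.mp h2 with h | h
      · exact absurd h (pow_ne_zero 2 hβ)
      · exact h
    field_simp
    linarith
  -- G x = β³ T x for x ≥ 0
  have hGT : ∀ x ≥ (0:ℝ), G x = β^3 * T x := by
    intro x hx
    have hsp := integral_split hint hx
    rw [hnorm] at hsp
    rw [hGFTC x hx, hG0, hTdef]
    simp only
    linear_combination (β^3) * hsp
  -- tail limits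
  have hT0 : Tendsto T atTop (nhds 0) := tail_tendsto_zero hint
  have hTnonneg : ∀ x : ℝ, 0 ≤ T x := fun x =>
    setIntegral_nonneg measurableSet_Ioi (fun t _ => sq_nonneg (Ψ t))
  have htail_bound : ∀ (k : ℕ), k ≤ 2 → ∀ x ≥ (0:ℝ),
      x^k * T x ≤ ∫ t in Ioi x, t^k * Ψ t ^ 2 := by
    intro k hk x hx
    have hints : IntegrableOn (fun t => t^k * Ψ t ^ 2) (Ioi x) := by
      rcases (show k = 0 ∨ k = 1 ∨ k = 2 by omega) with h | h | h <;> subst h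
      · simpa using hint.mono_set (Ioi_subset_Ioi hx)
      · simpa using hint2.mono_set (Ioi_subset_Ioi hx)
      · exact hint4.mono_set (Ioi_subset_Ioi hx)
    have : x^k * T x = ∫ t in Ioi x, x^k * Ψ t ^ 2 := by
      rw [hTdef]; simp only
      rw [MeasureTheory.integral_const_mul]
    rw [this]
    apply setIntegral_mono_on ((hint.mono_set (Ioi_subset_Ioi hx)).const_mul _) hints
      measurableSet_Ioi
    intro t ht
    have hxt : x ≤ t := le_of_lt ht
    have hxk : x^k ≤ t^k := pow_le_pow_left₀ hx hxt k
    nlinarith [sq_nonneg (Ψ t)]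
  have hxT : Tendsto (fun x => x * T x) atTop (nhds 0) := by
    apply tendsto_of_tendsto_of_tendsto_of_le_of_le' tendsto_const_nhds
      (tail_tendsto_zero hint2)
    · filter_upwards [eventually_ge_atTop (0:ℝ)] with x hx
      exact mul_nonneg hx (hTnonneg x)
    · filter_upwards [eventually_ge_atTop (0:ℝ)] with x hx
      simpa using htail_bound 1 (by norm_num) x hx
  have hx2T : Tendsto (fun x => x^2 * T x) atTop (nhds 0) := by
    apply tendsto_of_tendsto_of_tendsto_of_le_of_le' tendsto_const_nhds
      (tail_tendsto_zero hint4)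
    · filter_upwards [eventually_ge_atTop (0:ℝ)] with x hx
      exact mul_nonneg (by positivity) (hTnonneg x)
    · filter_upwards [eventually_ge_atTop (0:ℝ)] with x hx
      exact htail_bound 2 (by norm_num) x hx
  -- Identity 1: multiplier Ψ'
  have e1 : J0 + β^3 * I1 + β^2 * α = 0 := by
    have hF' := hiB
    have hd : ∀ x ∈ Ici (0:ℝ), HasDerivAt (fun y => deriv Ψ y * Ψ y)
        (deriv Ψ x ^ 2 + β^3 * (x * Ψ x ^ 2) + β^2 * α * Ψ x ^ 2) x := by
      intro x hx
      have h := (hΨ'at x hx).mul (hΨat x)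
      refine h.congr_deriv ?_
      ring
    have hlim : Tendsto (fun x => deriv Ψ x * Ψ x) atTop (nhds 0) := by
      have := hdecay'.mul hdecay; rwa [mul_zero] at this
    have hres := integral_Ioi_of_hasDerivAt_of_tendsto' hd hF' hlim
    rw [integral_add hiA (hint.const_mul (β^2*α)),
        integral_add hint' (hint2.const_mul (β^3)),
        MeasureTheory.integral_const_mul, MeasureTheory.integral_const_mul, hnorm] at hres
    simp only [hNeu, zero_mul, sub_zero, zero_sub, neg_zero] at hres
    rw [← hJ0def, ← hI1def] at hres
    linarith
  -- the integral of G
  have hGval : (∫ x in Ioi (0:ℝ), G x) = J0 - β^3 * I1 - β^2 * α := by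
    have h1 : (∫ x in Ioi (0:ℝ), G x)
        = ∫ x in Ioi (0:ℝ), (deriv Ψ x ^ 2 - (β^3 * (x * Ψ x ^ 2) + β^2 * α * Ψ x ^ 2)) := by
      apply integral_congr_ae (ae_of_all _ fun x => ?_)
      simp only [hGdef]; ring
    rw [h1, integral_sub hint' hiC,
        integral_add (hint2.const_mul (β^3)) (hint.const_mul (β^2*α)),
        MeasureTheory.integral_const_mul, MeasureTheory.integral_const_mul, hnorm,
        ← hJ0def, ← hI1def]
    ring
  -- Identity 2: multiplier x Ψ'
  have e2 : (J0 - β^3 * I1 - β^2 * α) - β^3 * I1 = 0 := by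
    have hF' : IntegrableOn (fun x => G x - β^3 * (x * Ψ x ^ 2)) (Ioi (0:ℝ)) :=
      hG_int.sub (hint2.const_mul (β^3))
    have hd : ∀ x ∈ Ici (0:ℝ), HasDerivAt (fun y => y * G y)
        (G x - β^3 * (x * Ψ x ^ 2)) x := by
      intro x hx
      have h := (hasDerivAt_id x).mul (hGderiv x hx)
      refine h.congr_deriv ?_
      simp only [id_eq]
      ring
    have hlim : Tendsto (fun x => x * G x) atTop (nhds 0) := by
      have h2 := hxT.const_mul (β^3)
      rw [mul_zero] at h2
      apply h2.congr'
      filter_upwards [eventually_ge_atTop (0:ℝ)] with x hx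
      rw [hGT x hx]; ring
    have hres := integral_Ioi_of_hasDerivAt_of_tendsto' hd hF' hlim
    rw [integral_sub hG_int (hint2.const_mul (β^3)),
        MeasureTheory.integral_const_mul, ← hI1def, hGval] at hres
    simp only [zero_mul, sub_zero, zero_sub, mul_zero, neg_zero] at hres
    linarith
  -- integrability of x Ψ Ψ'
  have hxΨΨ'_int : IntegrableOn (fun x => x * (deriv Ψ x * Ψ x)) (Ioi (0:ℝ)) := by
    apply Integrable.mono' ((hint2.add hint3).div_const 2)
      ((continuous_id.mul (hcΨ'.mul hcΨ)).aestronglyMeasurable)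
    filter_upwards [ae_restrict_mem measurableSet_Ioi] with x hx
    have hx0 : (0:ℝ) < x := hx
    simp only [Real.norm_eq_abs, Pi.add_apply, Pi.mul_apply, id_eq, abs_mul, abs_of_pos hx0]
    have h1 := sq_nonneg (|deriv Ψ x| - |Ψ x|)
    have h2 : |deriv Ψ x|^2 = deriv Ψ x ^ 2 := sq_abs _
    have h3 : |Ψ x|^2 = Ψ x ^ 2 := sq_abs _
    nlinarith [abs_nonneg (deriv Ψ x), abs_nonneg (Ψ x)]
  -- Identity 3: multiplier x Ψ
  have e3 : J1 + β^3 * I2 + β^2 * α * I1 = Ψ 0 ^ 2 / 2 := by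
    set f3 : ℝ → ℝ := fun x => x * (deriv Ψ x * Ψ x) - Ψ x ^ 2 / 2 with hf3def
    set f3' : ℝ → ℝ := fun x =>
      x * deriv Ψ x ^ 2 + β^3 * (x^2 * Ψ x ^ 2) + β^2 * α * (x * Ψ x ^ 2) with hf3'def
    have hF' : IntegrableOn f3' (Ioi (0:ℝ)) := hiE
    have hd : ∀ x ≥ (0:ℝ), HasDerivAt f3 (f3' x) x := by
      intro x hx
      have h := ((hasDerivAt_id x).mul ((hΨ'at x hx).mul (hΨat x))).sub
        (((hΨat x).pow 2).div_const 2)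
      refine h.congr_deriv ?_
      simp only [id_eq, Pi.mul_apply, hf3'def]
      ring
    have hrep : ∀ x ≥ (0:ℝ), f3 x = f3 0 + ∫ t in (0:ℝ)..x, f3' t := by
      intro x hx
      have hftc : (∫ t in (0:ℝ)..x, f3' t) = f3 x - f3 0 := by
        apply intervalIntegral.integral_eq_sub_of_hasDerivAt
        · intro t ht
          rw [uIcc_of_le hx] at ht
          exact hd t ht.1
        · apply Continuous.intervalIntegrable
          simp only [hf3'def]
          exact ((continuous_id.mul (hcΨ'.pow 2)).add
            (continuous_const.mul ((continuous_pow 2).mul (hcΨ.pow 2)))).add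
            (continuous_const.mul (continuous_id.mul (hcΨ.pow 2)))
      linarith
    have htend : Tendsto f3 atTop (nhds (f3 0 + ∫ t in Ioi (0:ℝ), f3' t)) := by
      have h1 := (intervalIntegral_tendsto_integral_Ioi 0 hF' tendsto_id).const_add (f3 0)
      apply h1.congr'
      filter_upwards [eventually_ge_atTop (0:ℝ)] with x hx
      exact (hrep x hx).symm
    have hu : Tendsto (fun x => x * (deriv Ψ x * Ψ x)) atTop
        (nhds ((f3 0 + ∫ t in Ioi (0:ℝ), f3' t) + 0)) := by
      have h2 := hΨsq.div_const 2
      rw [zero_div] at h2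
      have h3 := htend.add h2
      apply h3.congr
      intro x
      simp only [hf3def]
      ring
    have hL := limit_zero_of_integrableOn hxΨΨ'_int hu
    rw [add_zero] at hL
    have hf30 : f3 0 = - (Ψ 0 ^ 2 / 2) := by simp [hf3def]
    have hsplit : (∫ t in Ioi (0:ℝ), f3' t) = J1 + β^3 * I2 + β^2 * α * I1 := by
      rw [hf3'def]
      rw [integral_add hiD (hint2.const_mul (β^2*α)),
          integral_add hint3 (hint4.const_mul (β^3)),
          MeasureTheory.integral_const_mul, MeasureTheory.integral_const_mul,
          ← hJ1def, ← hI1def, ← hI2def]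
    rw [hf30, hsplit] at hL
    linarith
  -- Identity 4 (via the tail function)
  have e4' : J1 - β^3 * I2 - β^2 * α * I1 = β^3 * (I2 / 2) := by
    set P : ℝ → ℝ := fun x => ∫ t in (0:ℝ)..x, Ψ t ^ 2 with hPdef
    have hPcont : Continuous P :=
      intervalIntegral.continuous_primitive (fun a b => (hcΨ.pow 2).intervalIntegrable a b) 0
    have hPder : ∀ x : ℝ, HasDerivAt P (Ψ x ^ 2) x := by
      intro x
      exact intervalIntegral.integral_hasDerivAt_right ((hcΨ.pow 2).intervalIntegrable 0 x)
        ((hcΨ.pow 2).stronglyMeasurableAtFilter _ _) ((hcΨ.pow 2).continuousAt)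
    have hTP : ∀ x ≥ (0:ℝ), T x = 1 - P x := by
      intro x hx
      have hsp := integral_split hint hx
      rw [hnorm] at hsp
      simp only [hTdef, hPdef]
      linarith
    set W : ℝ → ℝ := fun x => x^2 * (1 - P x) / 2 with hWdef
    set f4' : ℝ → ℝ := fun x =>
      (β^3)⁻¹ * (x * deriv Ψ x ^ 2 - β^3 * (x^2 * Ψ x ^ 2) - β^2 * α * (x * Ψ x ^ 2))
        - x^2 * Ψ x ^ 2 / 2 with hf4'def
    have hF' : IntegrableOn f4' (Ioi (0:ℝ)) := hiH.sub hiI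
    have hd : ∀ x ∈ Ioi (0:ℝ), HasDerivAt W (f4' x) x := by
      intro x hx
      have hx0 : (0:ℝ) ≤ x := le_of_lt hx
      have h := ((hasDerivAt_pow 2 x).mul ((hasDerivAt_const x (1:ℝ)).sub (hPder x))).div_const 2
      refine h.congr_deriv ?_
      simp only [Pi.sub_apply]
      have h1 : 1 - P x = T x := (hTP x hx0).symm
      have h2 : G x = β^3 * T x := hGT x hx0
      have h3 : x * G x = x * deriv Ψ x ^ 2 - β^3 * (x^2 * Ψ x ^ 2) - β^2 * α * (x * Ψ x ^ 2) := by
        simp only [hGdef]; ring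
      rw [hf4'def]
      simp only []
      rw [← h3, h2, h1]
      field_simp
      ring
    have hWcont : ContinuousWithinAt W (Ici (0:ℝ)) 0 :=
      (((continuous_pow 2).mul (continuous_const.sub hPcont)).div_const 2).continuousWithinAt
    have hWlim : Tendsto W atTop (nhds 0) := by
      have h2 := hx2T.div_const 2
      rw [zero_div] at h2
      apply h2.congr'
      filter_upwards [eventually_ge_atTop (0:ℝ)] with x hx
      simp only [hWdef]
      rw [← hTP x hx]
    have hres := integral_Ioi_of_hasDerivAt_of_tendsto hWcont hd hF' hWlim
    have hW0 : W 0 = 0 := by simp [hWdef]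
    rw [hW0, sub_zero] at hres
    have hsplit : (∫ x in Ioi (0:ℝ), f4' x)
        = (β^3)⁻¹ * (J1 - β^3 * I2 - β^2 * α * I1) - I2 / 2 := by
      rw [hf4'def]
      rw [integral_sub hiH hiI,
        MeasureTheory.integral_const_mul,
        integral_sub hiF (hint2.const_mul (β^2*α)),
        integral_sub hint3 (hint4.const_mul (β^3)),
        MeasureTheory.integral_const_mul, MeasureTheory.integral_const_mul,
        integral_div, ← hJ1def, ← hI1def, ← hI2def]
    rw [hsplit] at hres
    have h5 : (β^3)⁻¹ * (J1 - β^3 * I2 - β^2 * α * I1) = I2 / 2 := by linarith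
    have h6 := (inv_mul_eq_iff_eq_mul₀ hβ3).mp h5
    linarith [h6]
  -- final algebra
  have hΨ0' : α * Ψ 0 ^ 2 = -β := by
    rw [hΨ0]; field_simp
  have key2 : 15 * α * β^4 * I2 = (8 * α^3 - 3) * β^2 := by
    linear_combination (6*α*β) * e3 - (6*α*β) * e4' + (3*β) * hΨ0'
      - (4*α^2) * e1 + (4*α^2) * e2
  rw [eq_div_iff (by positivity : (15:ℝ) * α * β^2 ≠ 0)]
  have hfin : β^2 * (I2 * (15 * α * β^2)) = β^2 * (8 * α^3 - 3) := by
    linear_combination key2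
  exact mul_left_cancel₀ (pow_ne_zero 2 hβ) hfin
end

section
/- Let Ψ : ℝ → ℝ be smooth with -Ψ''(x) + (β³ x + β² α) Ψ(x) = 0 for x ≥ 0, sufficient decay at +∞, β ≠ 0, Dirichlet condition Ψ(0) = 0, and normalization ∫₀^∞ Ψ² dx = 1. Then ∫₀^∞ x² Ψ(x)² dx = 8α²/(15β²). -/
open MeasureTheory Set Filter

set_option maxHeartbeats 1000000

private lemma aux_lim_zero {F : ℝ → ℝ} {L : ℝ}
    (hF : Tendsto F atTop (nhds L))
    (hq : IntegrableOn (fun x => F x / x) (Ioi 1)) : L = 0 := by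
  by_contra hL
  have hL' : |L| ≠ 0 := abs_ne_zero.mpr hL
  have hL2 : 0 < |L| / 2 := by positivity
  have h2 : ∀ᶠ x in atTop, |L| / 2 ≤ |F x| := by
    filter_upwards [hF.eventually (Metric.ball_mem_nhds L hL2)] with x hx
    have h3 : |F x - L| < |L| / 2 := by
      simpa [Metric.mem_ball, Real.dist_eq] using hx
    have h4 := abs_sub_abs_le_abs_sub L (F x)
    rw [abs_sub_comm] at h4
    linarith
  rcases eventually_atTop.1 h2 with ⟨M, hM⟩
  have hc1 : (1:ℝ) ≤ max M 1 := le_max_right _ _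
  have hqc : IntegrableOn (fun x => |F x / x| * (2 / |L|)) (Ioi (max M 1)) :=
    ((hq.mono_set (Ioi_subset_Ioi hc1)).abs.mul_const _)
  have hbad : IntegrableOn (fun x : ℝ => x⁻¹) (Ioi (max M 1)) := by
    apply hqc.mono' measurable_inv.aestronglyMeasurable
    filter_upwards [ae_restrict_mem measurableSet_Ioi] with x hx
    have hx1 : (1:ℝ) < x := lt_of_le_of_lt hc1 hx
    have hx0 : (0:ℝ) < x := lt_trans zero_lt_one hx1
    have hFx : |L| / 2 ≤ |F x| := hM x (le_of_lt (lt_of_le_of_lt (le_max_left M 1) hx))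
    have e1 : |F x / x| = |F x| * x⁻¹ := by
      rw [abs_div, abs_of_pos hx0, div_eq_mul_inv]
    rw [Real.norm_eq_abs, abs_inv, abs_of_pos hx0, e1]
    have h5 : 0 ≤ x⁻¹ * (2/|L|) := by positivity
    calc x⁻¹ = (|L|/2) * (x⁻¹ * (2/|L|)) := by field_simp
      _ ≤ |F x| * (x⁻¹ * (2/|L|)) := mul_le_mul_of_nonneg_right hFx h5
      _ = |F x| * x⁻¹ * (2/|L|) := by ring
  exact not_IntegrableOn_Ioi_inv hbad

private lemma aux_ibp (F F' : ℝ → ℝ) (hF0 : F 0 = 0)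
    (hc : ContinuousWithinAt F (Ici 0) 0)
    (hd : ∀ x ∈ Ioi (0:ℝ), HasDerivAt F (F' x) x)
    (hi' : IntegrableOn F' (Ioi 0))
    (hlim : Tendsto F atTop (nhds 0)) : (∫ x in Ioi (0:ℝ), F' x) = 0 := by
  rw [integral_Ioi_of_hasDerivAt_of_tendsto hc hd hi' hlim, hF0, sub_zero]

theorem airy_dirichlet_second_moment (Ψ : ℝ → ℝ) (α β : ℝ) (hβ : β ≠ 0)
    (hsmooth : ContDiff ℝ (⊤ : ℕ∞) Ψ)
    (hode : ∀ x ≥ (0:ℝ), -(deriv (deriv Ψ) x) + (β^3 * x + β^2 * α) * Ψ x = 0)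
    (hdecay : Tendsto Ψ atTop (nhds 0))
    (hdecay' : Tendsto (deriv Ψ) atTop (nhds 0))
    (hint : IntegrableOn (fun x => Ψ x ^ 2) (Ioi 0))
    (hint' : IntegrableOn (fun x => deriv Ψ x ^ 2) (Ioi 0))
    (hint2 : IntegrableOn (fun x => x * Ψ x ^ 2) (Ioi 0))
    (hint3 : IntegrableOn (fun x => x * deriv Ψ x ^ 2) (Ioi 0))
    (hint4 : IntegrableOn (fun x => x^2 * Ψ x ^ 2) (Ioi 0))
    (hDir : Ψ 0 = 0)
    (hnorm : (∫ x in Ioi (0:ℝ), Ψ x ^ 2) = 1) :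
    (∫ x in Ioi (0:ℝ), x^2 * Ψ x ^ 2) = 8 * α^2 / (15 * β^2) := by
  have hsm : ContDiff ℝ ((⊤:ℕ∞) : WithTop ℕ∞) Ψ := hsmooth.of_le (by simp)
  have hΨdiff : Differentiable ℝ Ψ := (contDiff_infty_iff_deriv.mp hsm).1
  have hd1 : ∀ x : ℝ, HasDerivAt Ψ (deriv Ψ x) x := fun x => (hΨdiff x).hasDerivAt
  have hΨ'd : Differentiable ℝ (deriv Ψ) :=
    (contDiff_infty_iff_deriv.mp (contDiff_infty_iff_deriv.mp hsm).2).1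
  have hd2 : ∀ x : ℝ, HasDerivAt (deriv Ψ) (deriv (deriv Ψ) x) x :=
    fun x => (hΨ'd x).hasDerivAt
  have hcΨ : Continuous Ψ := hΨdiff.continuous
  have hcΨ' : Continuous (deriv Ψ) := hΨ'd.continuous
  have hODE : ∀ x ∈ Ioi (0:ℝ), deriv (deriv Ψ) x = (β^3*x + β^2*α) * Ψ x := by
    intro x hx
    have := hode x (le_of_lt hx)
    linarith
  -- Identity 1 : F1 = Ψ Ψ'
  have hdF1 : ∀ x ∈ Ioi (0:ℝ), HasDerivAt (fun y => Ψ y * deriv Ψ y)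
      (deriv Ψ x ^ 2 + (β^3*(x * Ψ x ^ 2) + β^2*α*(Ψ x ^ 2))) x := by
    intro x hx
    have h := (hd1 x).mul (hd2 x)
    refine h.congr_deriv ?_
    rw [hODE x hx]; ring
  have hiF1' : IntegrableOn (fun x => deriv Ψ x ^ 2 + (β^3*(x * Ψ x ^ 2) + β^2*α*(Ψ x ^ 2)))
      (Ioi 0) := hint'.add ((hint2.const_mul _).add (hint.const_mul _))
  have hg1 : IntegrableOn (fun x => (Ψ x ^ 2 + deriv Ψ x ^ 2) / 2) (Ioi 0) :=
    (hint.add hint').div_const 2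
  have hiF1 : IntegrableOn (fun x => Ψ x * deriv Ψ x) (Ioi 0) := by
    apply Integrable.mono' hg1 ((hcΨ.mul hcΨ').aestronglyMeasurable)
    filter_upwards with x
    rw [Real.norm_eq_abs, Pi.mul_apply, abs_mul]
    nlinarith [sq_nonneg (|Ψ x| - |deriv Ψ x|), sq_abs (Ψ x), sq_abs (deriv Ψ x)]
  have eq1 : (∫ x in Ioi (0:ℝ), (deriv Ψ x ^ 2 + (β^3*(x * Ψ x ^ 2) + β^2*α*(Ψ x ^ 2)))) = 0 := by
    apply aux_ibp _ _ (by rw [Pi.mul_apply, hDir, zero_mul]) (hcΨ.mul hcΨ').continuousWithinAt hdF1 hiF1'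
    exact tendsto_zero_of_hasDerivAt_of_integrableOn_Ioi hdF1 hiF1' hiF1
  -- Identity 2 : F2 = x Ψ'^2 - (β³x²+β²αx) Ψ²
  have hdF2 : ∀ x ∈ Ioi (0:ℝ), HasDerivAt
      (fun y => y * deriv Ψ y ^ 2 - (β^3*(y^2 * Ψ y ^ 2) + β^2*α*(y * Ψ y ^ 2)))
      (deriv Ψ x ^ 2 - (2*β^3*(x * Ψ x ^ 2) + β^2*α*(Ψ x ^ 2))) x := by
    intro x hx
    have hA := (hasDerivAt_id x).mul ((hd2 x).pow 2)
    have hB := (((hasDerivAt_pow 2 x).mul ((hd1 x).pow 2)).const_mul (β^3))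
    have hC := (((hasDerivAt_id x).mul ((hd1 x).pow 2)).const_mul (β^2*α))
    have h := hA.sub (hB.add hC)
    refine h.congr_deriv ?_
    rw [hODE x hx]; simp only [id_eq, Pi.mul_apply, Pi.pow_apply]; push_cast; ring
  have hiF2' : IntegrableOn (fun x => deriv Ψ x ^ 2 - (2*β^3*(x * Ψ x ^ 2) + β^2*α*(Ψ x ^ 2)))
      (Ioi 0) := hint'.sub ((hint2.const_mul _).add (hint.const_mul _))
  have hiF2 : IntegrableOn (fun x => x * deriv Ψ x ^ 2 - (β^3*(x^2 * Ψ x ^ 2) + β^2*α*(x * Ψ x ^ 2)))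
      (Ioi 0) := hint3.sub ((hint4.const_mul _).add (hint2.const_mul _))
  have hcF2 : Continuous (fun x => x * deriv Ψ x ^ 2 - (β^3*(x^2 * Ψ x ^ 2) + β^2*α*(x * Ψ x ^ 2))) := by
    continuity
  have eq2 : (∫ x in Ioi (0:ℝ), (deriv Ψ x ^ 2 - (2*β^3*(x * Ψ x ^ 2) + β^2*α*(Ψ x ^ 2)))) = 0 := by
    apply aux_ibp _ _ (by norm_num) hcF2.continuousWithinAt hdF2 hiF2'
    exact tendsto_zero_of_hasDerivAt_of_integrableOn_Ioi hdF2 hiF2' hiF2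
  -- Identity 3 : F3 = x Ψ Ψ' - Ψ²/2
  have hdF3 : ∀ x ∈ Ioi (0:ℝ), HasDerivAt
      (fun y => y * (Ψ y * deriv Ψ y) - Ψ y ^ 2 / 2)
      (x * deriv Ψ x ^ 2 + (β^3*(x^2 * Ψ x ^ 2) + β^2*α*(x * Ψ x ^ 2))) x := by
    intro x hx
    have hA := (hasDerivAt_id x).mul ((hd1 x).mul (hd2 x))
    have hB := ((hd1 x).pow 2).div_const 2
    have h := hA.sub hB
    refine h.congr_deriv ?_
    rw [hODE x hx]; simp only [id_eq, Pi.mul_apply, Pi.pow_apply]; push_cast; ring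
  have hiF3' : IntegrableOn (fun x => x * deriv Ψ x ^ 2 + (β^3*(x^2 * Ψ x ^ 2) + β^2*α*(x * Ψ x ^ 2)))
      (Ioi 0) := hint3.add ((hint4.const_mul _).add (hint2.const_mul _))
  have hg3 : IntegrableOn (fun x => (x * Ψ x ^ 2 + x * deriv Ψ x ^ 2) / 2) (Ioi 0) :=
    (hint2.add hint3).div_const 2
  have hiF3a : IntegrableOn (fun x => x * (Ψ x * deriv Ψ x)) (Ioi 0) := by
    apply Integrable.mono' hg3 ((continuous_id.mul (hcΨ.mul hcΨ')).aestronglyMeasurable)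
    filter_upwards [ae_restrict_mem measurableSet_Ioi] with x hx
    have hx0 : (0:ℝ) < x := hx
    simp only [id_eq, Pi.mul_apply]
    rw [Real.norm_eq_abs, abs_mul, abs_mul, abs_of_pos hx0]
    have h1 : |Ψ x| * |deriv Ψ x| ≤ (Ψ x ^ 2 + deriv Ψ x ^ 2)/2 := by
      nlinarith [sq_nonneg (|Ψ x| - |deriv Ψ x|), sq_abs (Ψ x), sq_abs (deriv Ψ x)]
    nlinarith [mul_le_mul_of_nonneg_left h1 hx0.le]
  have hiF3 : IntegrableOn (fun x => x * (Ψ x * deriv Ψ x) - Ψ x ^ 2 / 2) (Ioi 0) :=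
    hiF3a.sub (hint.div_const 2)
  have eq3 : (∫ x in Ioi (0:ℝ), (x * deriv Ψ x ^ 2 + (β^3*(x^2 * Ψ x ^ 2) + β^2*α*(x * Ψ x ^ 2)))) = 0 := by
    apply aux_ibp _ _ (by simp [hDir]) ((continuous_id.mul (hcΨ.mul hcΨ')).sub
      ((hcΨ.pow 2).div_const 2)).continuousWithinAt hdF3 hiF3'
    exact tendsto_zero_of_hasDerivAt_of_integrableOn_Ioi hdF3 hiF3' hiF3
  -- Identity 4 : F4 = x * F2
  have hdF4 : ∀ x ∈ Ioi (0:ℝ), HasDerivAt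
      (fun y => y * (y * deriv Ψ y ^ 2 - (β^3*(y^2 * Ψ y ^ 2) + β^2*α*(y * Ψ y ^ 2))))
      (2*(x * deriv Ψ x ^ 2) - (3*β^3*(x^2 * Ψ x ^ 2) + 2*β^2*α*(x * Ψ x ^ 2))) x := by
    intro x hx
    have h := (hasDerivAt_id x).mul (hdF2 x hx)
    refine h.congr_deriv ?_
    simp only [id_eq]; ring
  have hiF4' : IntegrableOn (fun x => 2*(x * deriv Ψ x ^ 2) - (3*β^3*(x^2 * Ψ x ^ 2) + 2*β^2*α*(x * Ψ x ^ 2)))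
      (Ioi 0) := (hint3.const_mul _).sub ((hint4.const_mul _).add (hint2.const_mul _))
  have hlim4 : Tendsto (fun x => x * (x * deriv Ψ x ^ 2 - (β^3*(x^2 * Ψ x ^ 2) + β^2*α*(x * Ψ x ^ 2))))
      atTop (nhds 0) := by
    have hT := tendsto_limUnder_of_hasDerivAt_of_integrableOn_Ioi hdF4 hiF4'
    have hq : IntegrableOn (fun x => (x * (x * deriv Ψ x ^ 2 - (β^3*(x^2 * Ψ x ^ 2) + β^2*α*(x * Ψ x ^ 2)))) / x)
        (Ioi 1) := by
      apply (hiF2.mono_set (Ioi_subset_Ioi zero_le_one)).congr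
      filter_upwards [ae_restrict_mem measurableSet_Ioi] with x hx
      rw [mul_div_cancel_left₀ _ (ne_of_gt (lt_trans zero_lt_one hx))]
    have hz := aux_lim_zero hT hq
    rwa [hz] at hT
  have eq4 : (∫ x in Ioi (0:ℝ), (2*(x * deriv Ψ x ^ 2) - (3*β^3*(x^2 * Ψ x ^ 2) + 2*β^2*α*(x * Ψ x ^ 2)))) = 0 := by
    apply aux_ibp _ _ (by norm_num) (continuous_id.mul hcF2).continuousWithinAt hdF4 hiF4' hlim4
  -- split the integrals
  have ha1 : IntegrableOn (fun x => β^3*(x * Ψ x ^ 2)) (Ioi 0) := hint2.const_mul _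
  have ha2 : IntegrableOn (fun x => β^2*α*(Ψ x ^ 2)) (Ioi 0) := hint.const_mul _
  have ha3 : IntegrableOn (fun x => 2*β^3*(x * Ψ x ^ 2)) (Ioi 0) := hint2.const_mul _
  have ha4 : IntegrableOn (fun x => β^3*(x^2 * Ψ x ^ 2)) (Ioi 0) := hint4.const_mul _
  have ha5 : IntegrableOn (fun x => β^2*α*(x * Ψ x ^ 2)) (Ioi 0) := hint2.const_mul _
  have ha6 : IntegrableOn (fun x => 3*β^3*(x^2 * Ψ x ^ 2)) (Ioi 0) := hint4.const_mul _
  have ha7 : IntegrableOn (fun x => 2*β^2*α*(x * Ψ x ^ 2)) (Ioi 0) := hint2.const_mul _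
  have ha8 : IntegrableOn (fun x => 2*(x * deriv Ψ x ^ 2)) (Ioi 0) := hint3.const_mul _
  have hs1 : IntegrableOn (fun x => β^3*(x * Ψ x ^ 2) + β^2*α*(Ψ x ^ 2)) (Ioi 0) := ha1.add ha2
  have hs2 : IntegrableOn (fun x => 2*β^3*(x * Ψ x ^ 2) + β^2*α*(Ψ x ^ 2)) (Ioi 0) := ha3.add ha2
  have hs3 : IntegrableOn (fun x => β^3*(x^2 * Ψ x ^ 2) + β^2*α*(x * Ψ x ^ 2)) (Ioi 0) := ha4.add ha5
  have hs4 : IntegrableOn (fun x => 3*β^3*(x^2 * Ψ x ^ 2) + 2*β^2*α*(x * Ψ x ^ 2)) (Ioi 0) := ha6.add ha7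
  rw [integral_add hint' hs1, integral_add ha1 ha2,
    integral_const_mul _ _, integral_const_mul _ _, hnorm] at eq1
  rw [integral_sub hint' hs2, integral_add ha3 ha2,
    integral_const_mul _ _, integral_const_mul _ _, hnorm] at eq2
  rw [integral_add hint3 hs3, integral_add ha4 ha5,
    integral_const_mul _ _, integral_const_mul _ _] at eq3
  rw [integral_sub ha8 hs4, integral_add ha6 ha7,
    integral_const_mul _ _, integral_const_mul _ _, integral_const_mul _ _] at eq4
  -- algebra
  have hβ2 : β^2 ≠ 0 := pow_ne_zero 2 hβ
  set I1 := ∫ x in Ioi (0:ℝ), x * Ψ x ^ 2 with hI1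
  set I2 := ∫ x in Ioi (0:ℝ), x^2 * Ψ x ^ 2 with hI2
  have k1 : β^2 * (3*β*I1 + 2*α) = 0 := by linear_combination eq1 - eq2
  have k1' : 3*β*I1 + 2*α = 0 := (mul_eq_zero.mp k1).resolve_left hβ2
  have k2 : β^2 * (5*β*I2 + 4*α*I1) = 0 := by linear_combination 2*eq3 - eq4
  have k2' : 5*β*I2 + 4*α*I1 = 0 := (mul_eq_zero.mp k2).resolve_left hβ2
  rw [eq_div_iff (by simp [hβ2] : (15:ℝ)*β^2 ≠ 0)]
  linear_combination 3*β*k2' - 4*α*k1'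
end
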